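/- In the island model with fitness levels, if the migration topology is the complete graph K_μ on the μ islands, then the expected parallel running time satisfies E[T_par] ≤ m + 2m/p + (2/μ) · Σ_{i=1}^{m-1} 1/s_i. -/

import Mathlib

open MeasureTheory ProbabilityTheory ENNReal

/-- An island model with fitness levels. There are `nIslands` islands connected by the directed
migration topology `edge`, `m` fitness levels, success probabilities `s`, and a transmission
probability `p`. `X t v` is the level of island `v` at generation `t`. The model is driven by
independent Boolean random variables: `succ t v i` indicates that island `v` would create, by
its own variation, a point of level `> i` in generation `t + 1` if its level at generation `t`
is `i`; `trans t u v` indicates that transmission along the directed edge `(u, v)` succeeds in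
generation `t + 1`. -/
structure IslandModel where
  Ω : Type
  mΩ : MeasurableSpace Ω
  P : MeasureTheory.Measure Ω
  nIslands : ℕ
  m : ℕ
  edge : Fin nIslands → Fin nIslands → Prop
  s : ℕ → ℝ
  p : ℝ
  X : ℕ → Fin nIslands → Ω → ℕ
  succ : ℕ → Fin nIslands → ℕ → Ω → Bool
  trans : ℕ → Fin nIslands → Fin nIslands → Ω → Bool

namespace IslandModel

instance (M : IslandModel) : MeasurableSpace M.Ω := M.mΩ

/-- The combined family of driving Boolean random variables, indexed by the generation and
either an (island, level) pair (variation) or a directed edge (transmission). -/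
def B (M : IslandModel) :
    ℕ × (Fin M.nIslands × ℕ ⊕ Fin M.nIslands × Fin M.nIslands) → M.Ω → Bool
  | (t, Sum.inl (v, i)) => M.succ t v i
  | (t, Sum.inr (u, v)) => M.trans t u v

/-- The history σ-algebra up to generation `t`: generated by the levels of all islands up to
generation `t` together with the driving Boolean variables of the generations before `t`. -/
def hist (M : IslandModel) (t : ℕ) : MeasurableSpace M.Ω :=
  (⨆ q : {q : ℕ // q ≤ t} × Fin M.nIslands,
    MeasurableSpace.comap (M.X q.1.1 q.2) inferInstance) ⊔
  ⨆ j : {j : ℕ × (Fin M.nIslands × ℕ ⊕ Fin M.nIslands × Fin M.nIslands) // j.1 < t},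
    MeasurableSpace.comap (M.B j.1) inferInstance

/-- The σ-algebra generated by the driving Boolean variables of generations `≥ t`. -/
def future (M : IslandModel) (t : ℕ) : MeasurableSpace M.Ω :=
  ⨆ j : {j : ℕ × (Fin M.nIslands × ℕ ⊕ Fin M.nIslands × Fin M.nIslands) // t ≤ j.1},
    MeasurableSpace.comap (M.B j.1) inferInstance

/-- The defining properties of the island model: `P` is a probability measure; every island
always has a level in `{1, ..., m}` which never decreases (elitism); the driving Boolean
variables are mutually independent, and those of generations `≥ t` are independent of the
entire history up to generation `t`; each variation variable `succ t v i` succeeds with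
probability at least `s i` and forces island `v` to reach a level `> i` whenever its level is
`i < m`; each transmission variable of an edge `(u, v)` of the topology succeeds with
probability at least `p` and forces the level of `v` after generation `t + 1` to be at least
the level of `u` at generation `t`. -/
structure Valid (M : IslandModel) : Prop where
  prob : IsProbabilityMeasure M.P
  hμ : 1 ≤ M.nIslands
  hm : 1 ≤ M.m
  hs : ∀ i, 1 ≤ i → i + 1 ≤ M.m → 0 < M.s i ∧ M.s i ≤ 1
  hp0 : 0 < M.p
  hp1 : M.p ≤ 1
  hXmeas : ∀ t v, Measurable (M.X t v)
  hBmeas : ∀ j, Measurable (M.B j)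
  hXrange : ∀ t v ω, 1 ≤ M.X t v ω ∧ M.X t v ω ≤ M.m
  hXmono : ∀ t v ω, M.X t v ω ≤ M.X (t + 1) v ω
  hIndepB : ProbabilityTheory.iIndepFun M.B M.P
  hIndepHist : ∀ t, ProbabilityTheory.Indep (M.future t) (M.hist t) M.P
  hsuccProb : ∀ t v i, 1 ≤ i → i + 1 ≤ M.m →
    ENNReal.ofReal (M.s i) ≤ M.P {ω | M.succ t v i ω = true}
  htransProb : ∀ t u v, M.edge u v →
    ENNReal.ofReal M.p ≤ M.P {ω | M.trans t u v ω = true}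
  hsuccDyn : ∀ t v i ω, M.X t v ω = i → i + 1 ≤ M.m → M.succ t v i ω = true →
    i + 1 ≤ M.X (t + 1) v ω
  htransDyn : ∀ t u v ω, M.edge u v → M.trans t u v ω = true →
    M.X t u ω ≤ M.X (t + 1) v ω

/-- The parallel running time: the first generation at which some island has level `m`
(as an extended real, `∞` if this never happens). -/
noncomputable def Tpar (M : IslandModel) (ω : M.Ω) : ℝ≥0∞ :=
  ⨅ (t : ℕ) (_ : ∃ v, M.X t v ω = M.m), (t : ℝ≥0∞)

end IslandModel

/-!
Write `S i = ∑ₙ P(no island has reached level i by generation n)`, so that `E[T_par] ≤ S m`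
and `S 1 = 0`. Split the event that level `i + 1` is still missing at generation `t₀ + t`
according to the generation `t₀` and the least island `u` at which level `i` was first reached.
Level `i + 1` can then only be missing at `t₀ + t` if every island `v` failed either to receive
a transmission from `u` in the first `⌊t/2⌋` generations or to improve on level `i` in the
remaining `⌈t/2⌉` ones. These failures are independent across islands and of the history up to
`t₀`, so they occur together with probability at most `(1 - (1 - x) (1 - y)) ^ μ ≤ x + y ^ μ`,
where `x = (1 - p) ^ ⌊t/2⌋` and `y = (1 - sᵢ) ^ ⌈t/2⌉`. Summing over `t` gives
`S (i + 1) ≤ S i + 2 / p + (1 + r) / (1 - r)` with `r = (1 - sᵢ) ^ μ`, and Bernoulli's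
inequality `r (1 + μ sᵢ) ≤ 1` bounds the last term by `1 + 2 / (μ sᵢ)`.
-/

section Estimates

theorem one_sub_one_sub_mul_one_sub_pow_le {x y : ℝ} (hx0 : 0 ≤ x) (hx1 : x ≤ 1)
    (hy0 : 0 ≤ y) (hy1 : y ≤ 1) (n : ℕ) : (1 - (1 - x) * (1 - y)) ^ n ≤ x + y ^ n := by
  induction n with
  | zero => simp [hx0]
  | succ n ih =>
    have hz0 : 0 ≤ 1 - (1 - x) * (1 - y) := by nlinarith
    have hz1 : 1 - (1 - x) * (1 - y) ≤ 1 := by nlinarith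
    have hyn : 0 ≤ y ^ n := pow_nonneg hy0 n
    rw [pow_succ, pow_succ]
    rcases le_total (x + y ^ n) 1 with h | h
    · nlinarith [mul_le_mul_of_nonneg_right ih hz0,
        mul_nonneg (mul_nonneg hx0 (sub_nonneg.2 hy1)) (sub_nonneg.2 h)]
    · nlinarith [mul_le_mul_of_nonneg_right (pow_le_one₀ hz0 hz1 (n := n)) hz0,
        mul_nonneg hy0 (sub_nonneg.2 h)]

theorem one_sub_pow_mul_one_add_mul_le_one {s : ℝ} (hs0 : 0 ≤ s) (hs1 : s ≤ 1) (n : ℕ) :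
    (1 - s) ^ n * (1 + n * s) ≤ 1 :=
  calc (1 - s) ^ n * (1 + n * s) ≤ (1 - s) ^ n * (1 + s) ^ n :=
        mul_le_mul_of_nonneg_left (one_add_mul_le_pow (by linarith) n)
          (pow_nonneg (by linarith) n)
    _ = (1 - s * s) ^ n := by rw [← mul_pow]; ring
    _ ≤ 1 := pow_le_one₀ (by nlinarith) (by nlinarith)

theorem one_add_div_one_sub_le {r b : ℝ} (hb : 0 < b) (h : r * (1 + b) ≤ 1) :
    (1 + r) / (1 - r) ≤ 1 + 2 / b := by
  have hr : r < 1 := by nlinarith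
  have key : 2 * r ≤ 2 / b * (1 - r) := by
    rw [div_mul_eq_mul_div, le_div_iff₀ hb]
    linarith
  rw [div_le_iff₀ (by linarith)]
  linarith

theorem ENNReal.tsum_pow_div_two (a : ℝ≥0∞) : ∑' t : ℕ, a ^ (t / 2) = 2 / (1 - a) := by
  rw [← tsum_even_add_odd ENNReal.summable ENNReal.summable, div_eq_mul_inv, two_mul]
  have heven (k : ℕ) : 2 * k / 2 = k := by omega
  have hodd (k : ℕ) : (2 * k + 1) / 2 = k := by omega
  simp only [heven, hodd, ENNReal.tsum_geometric]

theorem ENNReal.tsum_pow_add_one_div_two (a : ℝ≥0∞) :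
    ∑' t : ℕ, a ^ ((t + 1) / 2) = (1 + a) / (1 - a) := by
  rw [← tsum_even_add_odd ENNReal.summable ENNReal.summable, div_eq_mul_inv, add_mul, one_mul]
  have heven (k : ℕ) : (2 * k + 1) / 2 = k := by omega
  have hodd (k : ℕ) : (2 * k + 1 + 1) / 2 = k + 1 := by omega
  simp only [heven, hodd, pow_succ', ENNReal.tsum_mul_left, ENNReal.tsum_geometric]

theorem ENNReal.tsum_sum_antidiagonal (f : ℕ → ℕ → ℝ≥0∞) :
    ∑' n, ∑ x ∈ Finset.HasAntidiagonal.antidiagonal n, f x.1 x.2 = ∑' a, ∑' b, f a b := by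
  rw [← ENNReal.tsum_prod, ← Finset.HasAntidiagonal.sigmaAntidiagonalEquivProd.tsum_eq,
    ENNReal.tsum_sigma']
  refine tsum_congr fun n => ?_
  rw [tsum_fintype, ← Finset.sum_coe_sort _ (fun x : ℕ × ℕ => f x.1 x.2)]
  rfl

theorem tsum_pow_div_two_add_pow_add_one_div_two_le {p s : ℝ} (hp0 : 0 < p) (hp1 : p ≤ 1)
    (hs0 : 0 < s) (hs1 : s ≤ 1) {n : ℕ} (hn : 1 ≤ n) :
    ∑' t : ℕ, (ENNReal.ofReal (1 - p) ^ (t / 2) + ENNReal.ofReal ((1 - s) ^ n) ^ ((t + 1) / 2))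
      ≤ ENNReal.ofReal (1 + 2 / p + 2 / (n * s)) := by
  have hr0 : 0 ≤ (1 - s) ^ n := pow_nonneg (by linarith) n
  have hr1 : (1 - s) ^ n < 1 := pow_lt_one₀ (by linarith) (by linarith) (by omega)
  have hone_sub {x : ℝ} (hx : 0 ≤ x) : 1 - ENNReal.ofReal x = ENNReal.ofReal (1 - x) := by
    rw [ENNReal.ofReal_sub 1 hx, ENNReal.ofReal_one]
  rw [ENNReal.tsum_add, ENNReal.tsum_pow_div_two, ENNReal.tsum_pow_add_one_div_two,
    hone_sub (by linarith), hone_sub hr0, sub_sub_cancel (1 : ℝ) p, ← ENNReal.ofReal_one,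
    ← ENNReal.ofReal_add zero_le_one hr0, ← ENNReal.ofReal_ofNat 2,
    ← ENNReal.ofReal_div_of_pos hp0, ← ENNReal.ofReal_div_of_pos (by linarith),
    ← ENNReal.ofReal_add (by positivity) (div_nonneg (by linarith) (by linarith))]
  refine ENNReal.ofReal_le_ofReal ?_
  have := one_add_div_one_sub_le (r := (1 - s) ^ n) (b := n * s) (by positivity)
    (by simpa [mul_comm] using one_sub_pow_mul_one_add_mul_le_one hs0.le hs1 n)
  linarith

theorem sum_Ico_one_add_two_div_add_two_div_le {m μ : ℕ} {p : ℝ} (hp : 0 < p) (s : ℕ → ℝ)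
    (hm : 1 ≤ m) :
    ∑ k ∈ Finset.Ico 1 m, (1 + 2 / p + 2 / (μ * s k)) ≤
      m + 2 * m / p + 2 / μ * ∑ k ∈ Finset.Icc 1 (m - 1), 1 / s k := by
  rw [Finset.Icc_sub_one_right_eq_Ico_of_not_isMin (by simpa using Nat.one_le_iff_ne_zero.1 hm),
    Finset.sum_add_distrib, Finset.sum_const, Nat.card_Ico, nsmul_eq_mul, Finset.mul_sum,
    Nat.cast_sub hm, Nat.cast_one]
  simp only [div_mul_div_comm, mul_one]
  have : 0 ≤ 2 / p := by positivity
  have : 2 * (m : ℝ) / p = m * (2 / p) := by ring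
  nlinarith

end Estimates

section Probability

variable {Ω : Type*} {mΩ : MeasurableSpace Ω} {μ : Measure Ω} [IsProbabilityMeasure μ]

theorem ProbabilityTheory.iIndep.measure_biInter_eq_prod_of_pairwiseDisjoint {J κ : Type*}
    {m : J → MeasurableSpace Ω} (h_le : ∀ j, m j ≤ mΩ) (h_indep : iIndep m μ)
    {K : Finset κ} {S : κ → Set J} (hS : (K : Set κ).PairwiseDisjoint S) {E : κ → Set Ω}
    (hE : ∀ k ∈ K, MeasurableSet[⨆ j ∈ S k, m j] (E k)) :
    μ (⋂ k ∈ K, E k) = ∏ k ∈ K, μ (E k) := by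
  classical
  induction K using Finset.induction_on with
  | empty => simp
  | @insert a K ha ih =>
    have hdisj : Disjoint (S a) (⋃ k ∈ K, S k) :=
      Set.disjoint_iUnion₂_right.2 fun k hk =>
        hS (by simp) (by simp [hk]) (by rintro rfl; exact ha hk)
    have hrest : MeasurableSet[⨆ j ∈ ⋃ k ∈ K, S k, m j] (⋂ k ∈ K, E k) :=
      .biInter K.countable_toSet fun k hk =>
        (biSup_mono fun j hj => Set.mem_biUnion hk hj : (⨆ j ∈ S k, m j) ≤ _) _
          (hE k (Finset.mem_insert_of_mem hk))
    rw [Finset.set_biInter_insert, Finset.prod_insert ha,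
      ← ih (hS.subset (by simp)) fun k hk => hE k (Finset.mem_insert_of_mem hk)]
    exact (Indep_iff _ _ _).1 (indep_iSup_of_disjoint h_le h_indep hdisj) _ _
      (hE a (Finset.mem_insert_self a K)) hrest

theorem prob_compl_le_ofReal_one_sub {E : Set Ω} (hE : MeasurableSet E) {c : ℝ} (hc : 0 ≤ c)
    (h : ENNReal.ofReal c ≤ μ E) : μ Eᶜ ≤ ENNReal.ofReal (1 - c) := by
  rw [prob_compl_eq_one_sub hE, ENNReal.ofReal_sub 1 hc, ENNReal.ofReal_one]
  exact tsub_le_tsub_left h 1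

theorem ofReal_one_sub_le_prob {E : Set Ω} (hE : MeasurableSet E) {c : ℝ} (hc : 0 ≤ c)
    (h : μ Eᶜ ≤ ENNReal.ofReal c) : ENNReal.ofReal (1 - c) ≤ μ E := by
  have hEc : μ E = 1 - μ Eᶜ := by rw [← prob_compl_eq_one_sub hE.compl, compl_compl]
  rw [hEc, ENNReal.ofReal_sub 1 hc, ENNReal.ofReal_one]
  exact tsub_le_tsub_left h 1

end Probability

namespace IslandModel

abbrev Coord (M : IslandModel) : Type :=
  ℕ × (Fin M.nIslands × ℕ ⊕ Fin M.nIslands × Fin M.nIslands)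

abbrev coordSigma (M : IslandModel) (S : Set M.Coord) : MeasurableSpace M.Ω :=
  ⨆ j ∈ S, MeasurableSpace.comap (M.B j) inferInstance

def belowLevel (M : IslandModel) (i n : ℕ) : Set M.Ω := {ω | ∀ v, M.X n v ω < i}

/-- Taking for `u` the least island at level `≥ i` makes these events pairwise disjoint. -/
def firstHit (M : IslandModel) (i t₀ : ℕ) (u : Fin M.nIslands) : Set M.Ω :=
  {ω | (∀ q < t₀, ∀ v, M.X q v ω < i) ∧ i ≤ M.X t₀ u ω ∧ ∀ w < u, M.X t₀ w ω < i}

def transmitted (M : IslandModel) (t₀ a : ℕ) (u v : Fin M.nIslands) : Set M.Ω :=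
  ⋃ r ∈ Finset.range a, {ω | M.trans (t₀ + r) u v ω = true}

def improved (M : IslandModel) (i t₀ a t : ℕ) (v : Fin M.nIslands) : Set M.Ω :=
  ⋃ r ∈ Finset.Ico a t, {ω | M.succ (t₀ + r) v i ω = true}

def relayed (M : IslandModel) (i t₀ a t : ℕ) (u v : Fin M.nIslands) : Set M.Ω :=
  (if v = u then Set.univ else M.transmitted t₀ a u v) ∩ M.improved i t₀ a t v

def relayCoords (M : IslandModel) (i t₀ : ℕ) (u v : Fin M.nIslands) : Set M.Coord :=
  {j | t₀ ≤ j.1 ∧ (j.2 = .inr (u, v) ∨ j.2 = .inl (v, i))}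

variable {M : IslandModel}

lemma monotone_X (hM : M.Valid) (v : Fin M.nIslands) (ω : M.Ω) :
    Monotone fun n => M.X n v ω :=
  monotone_nat_of_le_succ fun n => hM.hXmono n v ω

section Measurability

lemma measurableSet_coordSigma {S : Set M.Coord} {j : M.Coord} (hj : j ∈ S) (A : Set Bool) :
    MeasurableSet[M.coordSigma S] (M.B j ⁻¹' A) :=
  le_iSup₂ (f := fun j (_ : j ∈ S) => MeasurableSpace.comap (M.B j) inferInstance) j hj _
    ⟨A, trivial, rfl⟩

lemma coordSigma_mono {S T : Set M.Coord} (h : S ⊆ T) : M.coordSigma S ≤ M.coordSigma T :=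
  biSup_mono h

lemma coordSigma_le (hM : M.Valid) (S : Set M.Coord) : M.coordSigma S ≤ M.mΩ :=
  iSup₂_le fun j _ => (hM.hBmeas j).comap_le

lemma coordSigma_le_future {S : Set M.Coord} {t : ℕ} (h : ∀ j ∈ S, t ≤ j.1) :
    M.coordSigma S ≤ M.future t :=
  iSup₂_le fun j hj => le_iSup (fun j : {j : M.Coord // t ≤ j.1} =>
    MeasurableSpace.comap (M.B j.1) inferInstance) ⟨j, h j hj⟩

lemma measurable_X_hist {q t : ℕ} (hq : q ≤ t) (v : Fin M.nIslands) :
    Measurable[M.hist t] (M.X q v) :=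
  Measurable.of_comap_le <| le_sup_of_le_left <| le_iSup (fun q : {q : ℕ // q ≤ t} × _ =>
    MeasurableSpace.comap (M.X q.1.1 q.2) inferInstance) (⟨q, hq⟩, v)

lemma measurableSet_belowLevel (hM : M.Valid) (i n : ℕ) : MeasurableSet (M.belowLevel i n) := by
  simp only [belowLevel, Set.ofPred_forall]
  exact .iInter fun v => hM.hXmeas n v measurableSet_Iio

lemma measurableSet_firstHit {m : MeasurableSpace M.Ω} {i t₀ : ℕ}
    (hX : ∀ q ≤ t₀, ∀ v, Measurable[m] (M.X q v)) (u : Fin M.nIslands) :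
    MeasurableSet[m] (M.firstHit i t₀ u) := by
  simp only [firstHit, Set.ofPred_and, Set.ofPred_forall]
  exact .inter (.iInter fun q => .iInter fun hq => .iInter fun v =>
      hX q hq.le v measurableSet_Iio)
    (.inter (hX t₀ le_rfl u measurableSet_Ici)
      (.iInter fun w => .iInter fun _ => hX t₀ le_rfl w measurableSet_Iio))

lemma measurableSet_transmitted (t₀ a : ℕ) (u v : Fin M.nIslands) :
    MeasurableSet[M.coordSigma {j | t₀ ≤ j.1 ∧ j.2 = .inr (u, v)}]
      (M.transmitted t₀ a u v) :=
  .biUnion (Finset.range a).countable_toSet fun r _ =>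
    measurableSet_coordSigma (j := (t₀ + r, .inr (u, v))) (by exact ⟨by simp, rfl⟩) {true}

lemma measurableSet_improved (i t₀ a t : ℕ) (v : Fin M.nIslands) :
    MeasurableSet[M.coordSigma {j | t₀ ≤ j.1 ∧ j.2 = .inl (v, i)}]
      (M.improved i t₀ a t v) :=
  .biUnion (Finset.Ico a t).countable_toSet fun r _ =>
    measurableSet_coordSigma (j := (t₀ + r, .inl (v, i))) (by exact ⟨by simp, rfl⟩) {true}

lemma measurableSet_relayed (i t₀ a t : ℕ) (u v : Fin M.nIslands) :
    MeasurableSet[M.coordSigma (M.relayCoords i t₀ u v)] (M.relayed i t₀ a t u v) := by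
  refine .inter ?_ (coordSigma_mono (by exact fun j hj => ⟨hj.1, .inr hj.2⟩) _
    (measurableSet_improved i t₀ a t v))
  split_ifs
  · exact .univ
  · exact coordSigma_mono (by exact fun j hj => ⟨hj.1, .inl hj.2⟩) _
      (measurableSet_transmitted t₀ a u v)

end Measurability

section Relay

lemma measure_iInter_compl_le_pow (hM : M.Valid) {g : ℕ → M.Coord} (hg : g.Injective)
    (F : Finset ℕ) {c : ℝ} (hc : 0 ≤ c)
    (hprob : ∀ r ∈ F, ENNReal.ofReal c ≤ M.P (M.B (g r) ⁻¹' {true})) :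
    M.P (⋂ r ∈ F, (M.B (g r) ⁻¹' {true})ᶜ) ≤ ENNReal.ofReal (1 - c) ^ F.card := by
  have := hM.prob
  rw [hM.hIndepB.iIndep.measure_biInter_eq_prod_of_pairwiseDisjoint
    (fun j => (hM.hBmeas j).comap_le) (S := fun r => {g r})
    (E := fun r => (M.B (g r) ⁻¹' {true})ᶜ)
    (fun r _ r' _ h => Set.disjoint_singleton.2 (hg.ne h))
    (fun r _ => (measurableSet_coordSigma (Set.mem_singleton (g r)) {true}).compl)]
  exact Finset.prod_le_pow_card _ _ _ fun r hr =>
    prob_compl_le_ofReal_one_sub (hM.hBmeas _ (measurableSet_singleton true)) hc (hprob r hr)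

lemma ofReal_le_measure_transmitted (hM : M.Valid) (t₀ a : ℕ) {u v : Fin M.nIslands}
    (huv : M.edge u v) :
    ENNReal.ofReal (1 - (1 - M.p) ^ a) ≤ M.P (M.transmitted t₀ a u v) := by
  have := hM.prob
  have hp1 := hM.hp1
  refine ofReal_one_sub_le_prob (coordSigma_le hM _ _ (measurableSet_transmitted t₀ a u v))
    (pow_nonneg (by linarith) a) ?_
  have hcompl : (M.transmitted t₀ a u v)ᶜ =
      ⋂ r ∈ Finset.range a, (M.B (t₀ + r, .inr (u, v)) ⁻¹' {true})ᶜ := by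
    simp only [transmitted, Set.compl_iUnion]
    rfl
  calc M.P (M.transmitted t₀ a u v)ᶜ ≤ ENNReal.ofReal (1 - M.p) ^ (Finset.range a).card := by
        rw [hcompl]
        exact measure_iInter_compl_le_pow hM (fun r r' h => by simpa using h) _ hM.hp0.le
          fun r _ => hM.htransProb _ u v huv
    _ = ENNReal.ofReal ((1 - M.p) ^ a) := by
        rw [Finset.card_range, ENNReal.ofReal_pow (by linarith)]

lemma ofReal_le_measure_improved (hM : M.Valid) {i : ℕ} (hi : 1 ≤ i) (him : i + 1 ≤ M.m)
    (t₀ a t : ℕ) (v : Fin M.nIslands) :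
    ENNReal.ofReal (1 - (1 - M.s i) ^ (t - a)) ≤ M.P (M.improved i t₀ a t v) := by
  have := hM.prob
  obtain ⟨hs0, hs1⟩ := hM.hs i hi him
  refine ofReal_one_sub_le_prob (coordSigma_le hM _ _ (measurableSet_improved i t₀ a t v))
    (pow_nonneg (by linarith) _) ?_
  have hcompl : (M.improved i t₀ a t v)ᶜ =
      ⋂ r ∈ Finset.Ico a t, (M.B (t₀ + r, .inl (v, i)) ⁻¹' {true})ᶜ := by
    simp only [improved, Set.compl_iUnion]
    rfl
  calc M.P (M.improved i t₀ a t v)ᶜ ≤ ENNReal.ofReal (1 - M.s i) ^ (Finset.Ico a t).card := by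
        rw [hcompl]
        exact measure_iInter_compl_le_pow hM (fun r r' h => by simpa using h) _ hs0.le
          fun r _ => hM.hsuccProb _ v i hi him
    _ = ENNReal.ofReal ((1 - M.s i) ^ (t - a)) := by
        rw [Nat.card_Ico, ENNReal.ofReal_pow (by linarith)]

lemma measure_relayed_compl_le (hM : M.Valid) {i : ℕ} (hi : 1 ≤ i) (him : i + 1 ≤ M.m)
    (t₀ a t : ℕ) {u v : Fin M.nIslands} (hadj : u ≠ v → M.edge u v) :
    M.P (M.relayed i t₀ a t u v)ᶜ ≤
      ENNReal.ofReal (1 - (1 - (1 - M.p) ^ a) * (1 - (1 - M.s i) ^ (t - a))) := by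
  have := hM.prob
  obtain ⟨hs0, hs1⟩ := hM.hs i hi him
  have hp0 := hM.hp0
  have hp1 := hM.hp1
  have hx0 : 0 ≤ 1 - (1 - M.p) ^ a := sub_nonneg.2 (pow_le_one₀ (by linarith) (by linarith))
  have hx1 : 1 - (1 - M.p) ^ a ≤ 1 := by linarith [pow_nonneg (by linarith : 0 ≤ 1 - M.p) a]
  have hy0 : 0 ≤ 1 - (1 - M.s i) ^ (t - a) :=
    sub_nonneg.2 (pow_le_one₀ (by linarith) (by linarith))
  have hI := ofReal_le_measure_improved hM hi him t₀ a t v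
  refine prob_compl_le_ofReal_one_sub (coordSigma_le hM _ _ (measurableSet_relayed ..))
    (mul_nonneg hx0 hy0) ?_
  by_cases hvu : v = u
  · simp only [relayed, hvu, if_true, Set.univ_inter] at hI ⊢
    exact (ENNReal.ofReal_le_ofReal (mul_le_of_le_one_left hy0 hx1)).trans hI
  · have hindep : Indep (M.coordSigma {j | t₀ ≤ j.1 ∧ j.2 = .inr (u, v)})
        (M.coordSigma {j | t₀ ≤ j.1 ∧ j.2 = .inl (v, i)}) M.P :=
      indep_iSup_of_disjoint (fun j => (hM.hBmeas j).comap_le) hM.hIndepB.iIndep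
        (Set.disjoint_left.2 fun j h h' => by simp [h.2] at h')
    rw [relayed, if_neg hvu, (Indep_iff _ _ _).1 hindep _ _ (measurableSet_transmitted ..)
      (measurableSet_improved ..), ENNReal.ofReal_mul hx0]
    exact mul_le_mul' (ofReal_le_measure_transmitted hM t₀ a (hadj (Ne.symm hvu))) hI

lemma measure_iInter_relayed_compl_eq_prod (hM : M.Valid) (i t₀ a t : ℕ)
    (u : Fin M.nIslands) :
    M.P (⋂ v, (M.relayed i t₀ a t u v)ᶜ) = ∏ v, M.P (M.relayed i t₀ a t u v)ᶜ := by
  have := hM.prob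
  have hdisj : ((Finset.univ : Finset (Fin M.nIslands)) : Set _).PairwiseDisjoint
      (M.relayCoords i t₀ u) := by
    intro v _ w _ hvw
    refine Set.disjoint_left.2 fun j hv hw => hvw ?_
    rcases hv.2 with h | h <;> rcases hw.2 with h' | h' <;> simp_all
  simpa using hM.hIndepB.iIndep.measure_biInter_eq_prod_of_pairwiseDisjoint
    (fun j => (hM.hBmeas j).comap_le) hdisj
    (E := fun v => (M.relayed i t₀ a t u v)ᶜ) fun v _ => (measurableSet_relayed ..).compl

lemma measure_iInter_relayed_compl_le (hM : M.Valid) {i : ℕ} (hi : 1 ≤ i) (him : i + 1 ≤ M.m)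
    (t₀ t : ℕ) {u : Fin M.nIslands} (hadj : ∀ v, u ≠ v → M.edge u v) :
    M.P (⋂ v, (M.relayed i t₀ (t / 2) t u v)ᶜ) ≤
      ENNReal.ofReal (1 - M.p) ^ (t / 2) +
        ENNReal.ofReal ((1 - M.s i) ^ M.nIslands) ^ ((t + 1) / 2) := by
  obtain ⟨hs0, hs1⟩ := hM.hs i hi him
  have hp0 := hM.hp0
  have hp1 := hM.hp1
  set x := (1 - M.p) ^ (t / 2)
  set y := (1 - M.s i) ^ ((t + 1) / 2)
  have hx0 : 0 ≤ x := pow_nonneg (by linarith) _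
  have hy0 : 0 ≤ y := pow_nonneg (by linarith) _
  have hx1 : x ≤ 1 := pow_le_one₀ (by linarith) (by linarith)
  have hy1 : y ≤ 1 := pow_le_one₀ (by linarith) (by linarith)
  have hxy : 0 ≤ 1 - (1 - x) * (1 - y) := by nlinarith
  have ht : t - t / 2 = (t + 1) / 2 := by omega
  calc M.P (⋂ v, (M.relayed i t₀ (t / 2) t u v)ᶜ)
      ≤ ∏ _v : Fin M.nIslands, ENNReal.ofReal (1 - (1 - x) * (1 - y)) := by
        rw [measure_iInter_relayed_compl_eq_prod hM]
        refine Finset.prod_le_prod' fun v _ => ?_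
        simpa only [ht] using measure_relayed_compl_le hM hi him t₀ (t / 2) t (hadj v)
    _ = ENNReal.ofReal ((1 - (1 - x) * (1 - y)) ^ M.nIslands) := by
        rw [Finset.prod_const, Finset.card_univ, Fintype.card_fin, ENNReal.ofReal_pow hxy]
    _ ≤ ENNReal.ofReal (x + y ^ M.nIslands) :=
        ENNReal.ofReal_le_ofReal (one_sub_one_sub_mul_one_sub_pow_le hx0 hx1 hy0 hy1 _)
    _ = _ := by
        rw [ENNReal.ofReal_add hx0 (pow_nonneg hy0 _), ENNReal.ofReal_pow (by linarith),
          ← pow_mul, mul_comm, pow_mul, ENNReal.ofReal_pow (pow_nonneg (by linarith) _)]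

lemma le_X_of_mem_transmitted (hM : M.Valid) {i t₀ a : ℕ} {u v : Fin M.nIslands}
    (huv : M.edge u v) {ω : M.Ω} (hω : ω ∈ M.transmitted t₀ a u v) (hu : i ≤ M.X t₀ u ω) :
    i ≤ M.X (t₀ + a) v ω := by
  simp only [transmitted, Set.mem_iUnion, Finset.mem_range] at hω
  obtain ⟨r, hr, htrans⟩ := hω
  calc i ≤ M.X (t₀ + r) u ω := hu.trans (monotone_X hM u ω (by omega))
    _ ≤ M.X (t₀ + r + 1) v ω := hM.htransDyn _ u v ω huv htrans
    _ ≤ M.X (t₀ + a) v ω := monotone_X hM v ω (by omega)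

lemma subset_iInter_relayed_compl (hM : M.Valid) {i t₀ : ℕ} {u : Fin M.nIslands}
    (hadj : ∀ v, u ≠ v → M.edge u v) (him : i + 1 ≤ M.m) (a t : ℕ) :
    {ω | i ≤ M.X t₀ u ω} ∩ M.belowLevel (i + 1) (t₀ + t) ⊆
      ⋂ v, (M.relayed i t₀ a t u v)ᶜ := by
  rintro ω ⟨hu, hbelow⟩
  simp only [Set.mem_iInter, Set.mem_compl_iff]
  rintro v ⟨hT, hI⟩
  simp only [improved, Set.mem_iUnion, Finset.mem_Ico] at hI
  obtain ⟨r, ⟨har, hrt⟩, hsucc⟩ := hI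
  have hle (n : ℕ) (hn : n ≤ t₀ + t) : M.X n v ω ≤ i :=
    Nat.lt_succ_iff.1 ((monotone_X hM v ω hn).trans_lt (hbelow v))
  have hreach : i ≤ M.X (t₀ + a) v ω := by
    split_ifs at hT with hvu
    · exact hvu ▸ hu.trans (monotone_X hM u ω (Nat.le_add_right t₀ a))
    · exact le_X_of_mem_transmitted hM (hadj v (Ne.symm hvu)) hT hu
  have hlevel : M.X (t₀ + r) v ω = i :=
    (hle _ (by omega)).antisymm (hreach.trans (monotone_X hM v ω (by omega)))
  have := hM.hsuccDyn _ v i ω hlevel him hsucc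
  have := hle (t₀ + r + 1) (by omega)
  omega

lemma measure_firstHit_inter_belowLevel_le (hM : M.Valid) {i : ℕ} (hi : 1 ≤ i)
    (him : i + 1 ≤ M.m) (t₀ t : ℕ) {u : Fin M.nIslands} (hadj : ∀ v, u ≠ v → M.edge u v) :
    M.P (M.firstHit i t₀ u ∩ M.belowLevel (i + 1) (t₀ + t)) ≤
      M.P (M.firstHit i t₀ u) * (ENNReal.ofReal (1 - M.p) ^ (t / 2) +
        ENNReal.ofReal ((1 - M.s i) ^ M.nIslands) ^ ((t + 1) / 2)) := by
  have hfuture : MeasurableSet[M.future t₀] (⋂ v, (M.relayed i t₀ (t / 2) t u v)ᶜ) :=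
    .iInter fun v => (coordSigma_le_future (fun j hj => hj.1) _ (measurableSet_relayed ..)).compl
  calc M.P (M.firstHit i t₀ u ∩ M.belowLevel (i + 1) (t₀ + t))
      ≤ M.P (M.firstHit i t₀ u ∩ ⋂ v, (M.relayed i t₀ (t / 2) t u v)ᶜ) :=
        measure_mono fun ω hω =>
          ⟨hω.1, subset_iInter_relayed_compl hM hadj him _ t ⟨hω.1.2.1, hω.2⟩⟩
    _ = M.P (M.firstHit i t₀ u) * M.P (⋂ v, (M.relayed i t₀ (t / 2) t u v)ᶜ) :=
        (Indep_iff _ _ _).1 (hM.hIndepHist t₀).symm _ _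
          (measurableSet_firstHit (fun q hq v => measurable_X_hist hq v) u) hfuture
    _ ≤ _ := by
        gcongr
        exact measure_iInter_relayed_compl_le hM hi him t₀ t hadj

end Relay

section Levels

lemma exists_mem_firstHit {i n : ℕ} {ω : M.Ω} (h : ω ∉ M.belowLevel i n) :
    ∃ t₀ ≤ n, ∃ u, ω ∈ M.firstHit i t₀ u := by
  classical
  simp only [belowLevel, Set.mem_ofPred_eq, not_forall, not_lt] at h
  have hex : ∃ q, ∃ v, i ≤ M.X q v ω := ⟨n, h⟩
  obtain ⟨v, hv⟩ := Nat.find_spec hex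
  obtain ⟨u, hu, hmin⟩ := wellFounded_lt.has_min {w | i ≤ M.X (Nat.find hex) w ω} ⟨v, hv⟩
  refine ⟨Nat.find hex, Nat.find_min' hex h, u, fun q hq w => ?_, hu, fun w hw => ?_⟩
  · exact not_le.1 fun hw => Nat.find_min hex hq ⟨w, hw⟩
  · exact not_le.1 fun hw' => hmin w hw' hw

lemma eq_of_mem_firstHit {i t₀ t₁ : ℕ} {u w : Fin M.nIslands} {ω : M.Ω}
    (h₀ : ω ∈ M.firstHit i t₀ u) (h₁ : ω ∈ M.firstHit i t₁ w) : t₀ = t₁ ∧ u = w := by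
  obtain ⟨hbefore₀, hu, hmin₀⟩ := h₀
  obtain ⟨hbefore₁, hw, hmin₁⟩ := h₁
  obtain rfl : t₀ = t₁ := by
    by_contra hne
    rcases Nat.lt_or_gt_of_ne hne with h | h
    · exact (hbefore₁ t₀ h u).not_ge hu
    · exact (hbefore₀ t₁ h w).not_ge hw
  refine ⟨rfl, le_antisymm ?_ ?_⟩
  · exact not_lt.1 fun h => (hmin₀ w h).not_ge hw
  · exact not_lt.1 fun h => (hmin₁ u h).not_ge hu

lemma tsum_measure_firstHit_le_one (hM : M.Valid) (i : ℕ) :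
    ∑' t₀, ∑ u, M.P (M.firstHit i t₀ u) ≤ 1 := by
  have := hM.prob
  have hdisj : Pairwise (Function.onFun Disjoint fun x : ℕ × Fin M.nIslands =>
      M.firstHit i x.1 x.2) := fun x y hxy =>
    Set.disjoint_left.2 fun ω h₀ h₁ => hxy (Prod.ext_iff.2 (eq_of_mem_firstHit h₀ h₁))
  calc ∑' t₀, ∑ u, M.P (M.firstHit i t₀ u)
      = M.P (⋃ x : ℕ × Fin M.nIslands, M.firstHit i x.1 x.2) := by
        rw [measure_iUnion hdisj fun x =>
          measurableSet_firstHit (fun q _ v => hM.hXmeas q v) x.2, ENNReal.tsum_prod']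
        simp only [tsum_fintype]
    _ ≤ 1 := prob_le_one

lemma belowLevel_succ_subset (i n : ℕ) :
    M.belowLevel (i + 1) n ⊆ M.belowLevel i n ∪
      ⋃ x ∈ Finset.HasAntidiagonal.antidiagonal n, ⋃ u,
        M.firstHit i x.1 u ∩ M.belowLevel (i + 1) (x.1 + x.2) := by
  intro ω hω
  by_cases h : ω ∈ M.belowLevel i n
  · exact .inl h
  · obtain ⟨t₀, ht₀, u, hu⟩ := exists_mem_firstHit h
    refine .inr (Set.mem_biUnion (x := (t₀, n - t₀)) (by simp [ht₀]) ?_)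
    exact Set.mem_iUnion.2 ⟨u, hu, by rwa [Nat.add_sub_cancel' ht₀]⟩

lemma tsum_measure_belowLevel_succ_le (hM : M.Valid) (hedge : ∀ u v, u ≠ v → M.edge u v)
    {i : ℕ} (hi : 1 ≤ i) (him : i + 1 ≤ M.m) :
    ∑' n, M.P (M.belowLevel (i + 1) n) ≤ ∑' n, M.P (M.belowLevel i n) +
      ∑' t : ℕ, (ENNReal.ofReal (1 - M.p) ^ (t / 2) +
        ENNReal.ofReal ((1 - M.s i) ^ M.nIslands) ^ ((t + 1) / 2)) := by
  set f : ℕ → ℝ≥0∞ := fun t => ENNReal.ofReal (1 - M.p) ^ (t / 2) +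
    ENNReal.ofReal ((1 - M.s i) ^ M.nIslands) ^ ((t + 1) / 2)
  have hn (n : ℕ) : M.P (M.belowLevel (i + 1) n) ≤ M.P (M.belowLevel i n) +
      ∑ x ∈ Finset.HasAntidiagonal.antidiagonal n, ∑ u,
        M.P (M.firstHit i x.1 u ∩ M.belowLevel (i + 1) (x.1 + x.2)) := by
    refine (measure_mono (belowLevel_succ_subset i n)).trans ?_
    refine (measure_union_le _ _).trans (add_le_add le_rfl ?_)
    exact (measure_biUnion_finset_le _ _).trans
      (Finset.sum_le_sum fun x _ => measure_iUnion_fintype_le _ _)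
  calc ∑' n, M.P (M.belowLevel (i + 1) n)
      ≤ ∑' n, M.P (M.belowLevel i n) + ∑' t₀, ∑' t, ∑ u,
          M.P (M.firstHit i t₀ u ∩ M.belowLevel (i + 1) (t₀ + t)) := by
        rw [← ENNReal.tsum_sum_antidiagonal, ← ENNReal.tsum_add]
        exact ENNReal.tsum_le_tsum hn
    _ ≤ ∑' n, M.P (M.belowLevel i n) + ∑' t₀, ∑' t, ∑ u, M.P (M.firstHit i t₀ u) * f t := by
        gcongr with t₀ t u
        exact measure_firstHit_inter_belowLevel_le hM hi him t₀ t (hedge u)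
    _ = ∑' n, M.P (M.belowLevel i n) + (∑' t₀, ∑ u, M.P (M.firstHit i t₀ u)) * ∑' t, f t := by
        simp only [← Finset.sum_mul, ENNReal.tsum_mul_left, ENNReal.tsum_mul_right]
    _ ≤ ∑' n, M.P (M.belowLevel i n) + ∑' t, f t := by
        grw [tsum_measure_firstHit_le_one hM i, one_mul]

lemma tsum_measure_belowLevel_le (hM : M.Valid) (hedge : ∀ u v, u ≠ v → M.edge u v) {i : ℕ}
    (hi : 1 ≤ i) (him : i ≤ M.m) :
    ∑' n, M.P (M.belowLevel i n) ≤
      ∑ k ∈ Finset.Ico 1 i, ENNReal.ofReal (1 + 2 / M.p + 2 / (M.nIslands * M.s k)) := by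
  induction i, hi using Nat.le_induction with
  | base =>
    have hempty (n : ℕ) : M.belowLevel 1 n = ∅ := Set.eq_empty_of_forall_notMem fun ω h =>
      (h ⟨0, hM.hμ⟩).not_ge (hM.hXrange n _ ω).1
    simp [hempty]
  | succ i hi ih =>
    obtain ⟨hs0, hs1⟩ := hM.hs i hi him
    rw [Finset.sum_Ico_succ_top hi]
    exact (tsum_measure_belowLevel_succ_le hM hedge hi him).trans <| add_le_add (ih (by omega))
      (tsum_pow_div_two_add_pow_add_one_div_two_le hM.hp0 hM.hp1 hs0 hs1 hM.hμ)

end Levels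

lemma mem_belowLevel_m_iff (hM : M.Valid) {n : ℕ} {ω : M.Ω} :
    ω ∈ M.belowLevel M.m n ↔ ∀ v, M.X n v ω ≠ M.m :=
  forall_congr' fun v => (hM.hXrange n v ω).2.lt_iff_ne

lemma Tpar_le_tsum_indicator (hM : M.Valid) (ω : M.Ω) :
    M.Tpar ω ≤ ∑' n, (M.belowLevel M.m n).indicator 1 ω := by
  classical
  by_cases h : ∃ t v, M.X t v ω = M.m
  · have hbelow (n : ℕ) (hn : n < Nat.find h) : ω ∈ M.belowLevel M.m n :=
      (mem_belowLevel_m_iff hM).2 (by simpa using Nat.find_min h hn)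
    calc M.Tpar ω ≤ Nat.find h :=
          iInf₂_le (f := fun t (_ : ∃ v, M.X t v ω = M.m) => (t : ℝ≥0∞)) _ (Nat.find_spec h)
      _ = ∑ n ∈ Finset.range (Nat.find h), (M.belowLevel M.m n).indicator 1 ω := by
        simp [Finset.sum_congr rfl fun n hn => Set.indicator_of_mem
          (hbelow n (Finset.mem_range.1 hn)) (1 : M.Ω → ℝ≥0∞)]
      _ ≤ _ := ENNReal.sum_le_tsum _
  · push Not at h
    simp [Set.indicator_of_mem ((mem_belowLevel_m_iff hM).2 (h _))]

lemma lintegral_Tpar_le (hM : M.Valid) :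
    ∫⁻ ω, M.Tpar ω ∂M.P ≤ ∑' n, M.P (M.belowLevel M.m n) :=
  calc ∫⁻ ω, M.Tpar ω ∂M.P ≤ ∫⁻ ω, ∑' n, (M.belowLevel M.m n).indicator 1 ω ∂M.P :=
        lintegral_mono (Tpar_le_tsum_indicator hM)
    _ = ∑' n, M.P (M.belowLevel M.m n) := by
        rw [lintegral_tsum fun n =>
          (measurable_one.indicator (measurableSet_belowLevel hM _ n)).aemeasurable]
        simp [lintegral_indicator_one (measurableSet_belowLevel hM _ _)]

end IslandModel

/-- **Fitness levels on the complete topology (Theorem 7 in the paper).** If the migration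
topology is the complete graph `K_μ`, then the expected parallel running time is at most
`m + 2m/p + (2/μ) · ∑_{i=1}^{m-1} 1 / s_i`. -/
theorem parallel_EA_complete (M : IslandModel) (hM : M.Valid)
    (hedge : ∀ u v : Fin M.nIslands, M.edge u v ↔ u ≠ v) :
    ∫⁻ ω, M.Tpar ω ∂M.P ≤
      ENNReal.ofReal ((M.m : ℝ) + 2 * M.m / M.p
        + (2 / M.nIslands) * ∑ i ∈ Finset.Icc 1 (M.m - 1), 1 / M.s i) := by
  have hlevel_nonneg (k : ℕ) (hk : k ∈ Finset.Ico 1 M.m) :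
      0 ≤ 1 + 2 / M.p + 2 / (M.nIslands * M.s k) := by
    have := (hM.hs k (Finset.mem_Ico.1 hk).1 (Finset.mem_Ico.1 hk).2).1
    have := hM.hp0
    positivity
  calc ∫⁻ ω, M.Tpar ω ∂M.P ≤ ∑' n, M.P (M.belowLevel M.m n) := M.lintegral_Tpar_le hM
    _ ≤ ∑ k ∈ Finset.Ico 1 M.m, ENNReal.ofReal (1 + 2 / M.p + 2 / (M.nIslands * M.s k)) :=
        M.tsum_measure_belowLevel_le hM (fun u v => (hedge u v).2) hM.hm le_rfl
    _ = ENNReal.ofReal (∑ k ∈ Finset.Ico 1 M.m, (1 + 2 / M.p + 2 / (M.nIslands * M.s k))) :=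
        (ENNReal.ofReal_sum_of_nonneg hlevel_nonneg).symm
    _ ≤ _ := ENNReal.ofReal_le_ofReal (sum_Ico_one_add_two_div_add_two_div_le hM.hp0 M.s hM.hm)
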